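/- Let A ⊆ ℝ^m and B ⊆ ℝ^m be nonempty closed convex sets with A ⊆ B, let δ ∈ (0,1) with d_tH(hom A, hom B) ≤ δ, and let y ∈ bd A with ‖y‖ < √(1/δ² − 1). Then there exists n ∈ bd B such that d((n,1)/‖(n,1)‖, cone{(y,1)}) ≤ δ. -/

import Mathlib

open Metric Set

noncomputable section

/-- `ℝ^m` as a Euclidean space. -/
abbrev Em (m : ℕ) := EuclideanSpace ℝ (Fin m)

/-- `ℝ^(m+1)` realized as the L²-product `ℝ^m × ℝ`. -/
abbrev Em1 (m : ℕ) := WithLp 2 (Em m × ℝ)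

/-- The conic hull: all finite nonnegative combinations of elements of `M`. -/
def coneHull {V : Type*} [AddCommMonoid V] [Module ℝ V] (M : Set V) : Set V :=
  {x | ∃ (k : ℕ) (c : Fin k → ℝ) (v : Fin k → V),
    (∀ i, 0 ≤ c i) ∧ (∀ i, v i ∈ M) ∧ x = ∑ i, c i • v i}

/-- The ray `cone {v} = {λ • v : λ ≥ 0}`. -/
def ray {V : Type*} [AddCommMonoid V] [Module ℝ V] (v : V) : Set V :=
  {x | ∃ l : ℝ, 0 ≤ l ∧ x = l • v}

/-- The vector `(y, 1) ∈ ℝ^(m+1)` obtained by appending a last coordinate `1` to `y`. -/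
def lift1 {m : ℕ} (y : Em m) : Em1 m := (WithLp.equiv 2 (Em m × ℝ)).symm (y, 1)

/-- The homogenization `hom Z = cl (cone (Z × {1}))` of a set `Z ⊆ ℝ^m`. -/
def homog {m : ℕ} (Z : Set (Em m)) : Set (Em1 m) := closure (coneHull (lift1 '' Z))

/-- The truncated Hausdorff distance `d_tH(K₁, K₂) = d_H(K₁ ∩ 𝔹, K₂ ∩ 𝔹)`. -/
def dtH {V : Type*} [NormedAddCommGroup V] (K₁ K₂ : Set V) : ℝ :=
  hausdorffDist (K₁ ∩ closedBall 0 1) (K₂ ∩ closedBall 0 1)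

/-!
Let `s` be a normal of a supporting hyperplane of `A` at `y`. Then `ν`, the normalization of
`(s, -⟪s, y⟫)`, is a unit vector orthogonal to `v = (y, 1)/‖(y, 1)‖`, and `hom A` lies in the
half-space `⟪ν, ·⟫ ≤ 0`. Walk from `v` along `v + tν`, `t ≥ 0`, a path of norm `√(1 + t²)`.
While it stays in the cone `hom B`, its normalization lies in `hom B ∩ 𝔹` and is `δ`-close to
`hom A ∩ 𝔹 ⊆ {⟪ν, ·⟫ ≤ 0}`, so `t/√(1 + t²) ≤ δ`. As `δ < 1` the path must leave `hom B`, so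
it crosses the frontier of `hom B` at some `T` with `T/√(1 + T²) ≤ δ`, and `T/√(1 + T²)` bounds
the distance from the normalization of `v + Tν` to the ray through `(y, 1)`. The bound on `‖y‖`
gives `T‖y‖ < 1`, which keeps the last coordinate of `v + Tν` positive, so `v + Tν`
dehomogenizes to a frontier point of `B`.
-/

open Filter Topology
open scoped RealInnerProductSpace

section Cone

variable {V : Type*} [AddCommMonoid V] [Module ℝ V] {M : Set V}

lemma subset_coneHull : M ⊆ coneHull M :=
  fun x hx => ⟨1, fun _ => 1, fun _ => x, fun _ => zero_le_one, fun _ => hx, by simp⟩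

lemma smul_mem_coneHull {x : V} (hx : x ∈ coneHull M) {c : ℝ} (hc : 0 ≤ c) :
    c • x ∈ coneHull M := by
  obtain ⟨k, a, v, ha, hv, rfl⟩ := hx
  exact ⟨k, fun i => c * a i, v, fun i => mul_nonneg hc (ha i), hv, by
    simp only [Finset.smul_sum, mul_smul]⟩

lemma coneHull_mono {N : Set V} (h : M ⊆ N) : coneHull M ⊆ coneHull N :=
  fun _ ⟨k, a, v, ha, hv, hx⟩ => ⟨k, a, v, ha, fun i => h (hv i), hx⟩

end Cone

lemma exists_nonneg_mem_frontier_of_bddAbove {X : Type*} [TopologicalSpace X] {z : ℝ → X}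
    (hz : Continuous z) {K : Set X} (hK : IsClosed K) (h0 : z 0 ∈ K)
    (hbdd : BddAbove {t | 0 ≤ t ∧ z t ∈ K}) : ∃ T, 0 ≤ T ∧ z T ∈ frontier K := by
  set S := {t | 0 ≤ t ∧ z t ∈ K}
  have hT : sSup S ∈ S :=
    (isClosed_Ici.inter (hK.preimage hz)).csSup_mem ⟨0, le_refl (0 : ℝ), h0⟩ hbdd
  refine ⟨sSup S, hT.1, hK.frontier_eq ▸ ⟨hT.2, fun hint => ?_⟩⟩
  obtain ⟨t, ht, htK⟩ := (hz.continuousAt.eventually (isOpen_interior.mem_nhds hint)).exists_gt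
  exact ht.not_ge (le_csSup hbdd ⟨hT.1.trans ht.le, interior_subset htK⟩)

section InnerProductSpace

variable {E : Type*} [NormedAddCommGroup E] [InnerProductSpace ℝ E]

lemma exists_ne_zero_inner_le_of_notMem_interior [FiniteDimensional ℝ E] {A : Set E}
    (hA : Convex ℝ A) {y : E} (hyA : y ∈ A) (hy : y ∉ interior A) :
    ∃ s : E, s ≠ 0 ∧ ∀ x ∈ A, ⟪s, x⟫ ≤ ⟪s, y⟫ := by
  by_cases hint : (interior A).Nonempty
  · obtain ⟨f, hf0, hf⟩ := geometric_hahn_banach_of_nonempty_interior_point hA hy hint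
    refine ⟨(InnerProductSpace.toDual ℝ E).symm f, by simpa using hf0, fun x hx => ?_⟩
    simpa only [InnerProductSpace.toDual_symm_apply] using hf x hx
  · -- `A` lies in a proper affine subspace; take a normal vector of it.
    have hdir : (affineSpan ℝ A).direction ≠ ⊤ := fun h => hint <|
      hA.interior_nonempty_iff_affineSpan_eq_top.2 <|
        (AffineSubspace.direction_eq_top_iff_of_nonempty
          ((affineSpan_nonempty (k := ℝ)).2 ⟨y, hyA⟩)).1 h
    obtain ⟨s, hs, hs0⟩ := Submodule.exists_mem_ne_zero_of_ne_bot
      (mt Submodule.orthogonal_eq_bot_iff.1 hdir)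
    refine ⟨s, hs0, fun x hx => le_of_eq ?_⟩
    have hxy := AffineSubspace.vsub_mem_direction (subset_affineSpan ℝ A hx)
      (subset_affineSpan ℝ A hyA)
    rw [← sub_eq_zero, ← inner_sub_right, ← vsub_eq_sub]
    exact Submodule.inner_left_of_mem_orthogonal hxy hs

lemma inner_le_of_dtH_le {K₁ K₂ : Set E} {ν u : E} {δ : ℝ} (hν : ‖ν‖ ≤ 1)
    (hK₁ : ∀ p ∈ K₁, ⟪ν, p⟫ ≤ 0) (hne : (K₁ ∩ closedBall 0 1).Nonempty)
    (hd : dtH K₁ K₂ ≤ δ) (hu : u ∈ K₂) (hu1 : ‖u‖ ≤ 1) : ⟪ν, u⟫ ≤ δ := by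
  have huB : u ∈ K₂ ∩ closedBall 0 1 := ⟨hu, mem_closedBall_zero_iff.2 hu1⟩
  have hfin : hausdorffEDist (K₂ ∩ closedBall 0 1) (K₁ ∩ closedBall 0 1) ≠ ⊤ :=
    hausdorffEDist_ne_top_of_nonempty_of_bounded ⟨u, huB⟩ hne
      (isBounded_closedBall.subset inter_subset_right)
      (isBounded_closedBall.subset inter_subset_right)
  have hinf : ⟪ν, u⟫ ≤ infDist u (K₁ ∩ closedBall 0 1) := by
    refine (le_infDist hne).2 fun p hp => ?_
    calc ⟪ν, u⟫ ≤ ⟪ν, u⟫ - ⟪ν, p⟫ := by linarith [hK₁ p hp.1]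
      _ = ⟪ν, u - p⟫ := (inner_sub_right ν u p).symm
      _ ≤ ‖ν‖ * ‖u - p‖ := real_inner_le_norm ν (u - p)
      _ ≤ dist u p := by
        rw [dist_eq_norm]; exact mul_le_of_le_one_left (norm_nonneg _) hν
  calc ⟪ν, u⟫ ≤ infDist u (K₁ ∩ closedBall 0 1) := hinf
    _ ≤ hausdorffDist (K₂ ∩ closedBall 0 1) (K₁ ∩ closedBall 0 1) :=
      infDist_le_hausdorffDist_of_mem huB hfin
    _ ≤ δ := by rwa [hausdorffDist_comm]

lemma norm_add_smul_of_orthonormal {v ν : E} (hv : ‖v‖ = 1) (hν : ‖ν‖ = 1) (hνv : ⟪ν, v⟫ = 0)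
    (t : ℝ) : ‖v + t • ν‖ = √(1 + t ^ 2) := by
  rw [eq_comm, Real.sqrt_eq_iff_eq_sq (by positivity) (norm_nonneg _), norm_add_sq_real,
    real_inner_smul_right, real_inner_comm, hνv, norm_smul, hv, hν, Real.norm_eq_abs, mul_one,
    sq_abs]
  ring

lemma infDist_smul_ray_le (w x : E) {c r : ℝ} (hc : 0 ≤ c) (hr : 0 ≤ r) :
    infDist (r • w) (ray x) ≤ r * ‖w - c • x‖ := by
  calc infDist (r • w) (ray x) ≤ dist (r • w) ((r * c) • x) :=
        infDist_le_dist_of_mem ⟨r * c, mul_nonneg hr hc, rfl⟩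
    _ = r * ‖w - c • x‖ := by
        rw [dist_eq_norm, mul_smul, ← smul_sub, norm_smul, Real.norm_of_nonneg hr]

lemma exists_frontier_along_orthogonal_ray {K₁ K₂ : Set E} {v ν : E} {δ : ℝ}
    (hK₂ : IsClosed K₂) (hcone : ∀ c : ℝ, 0 ≤ c → ∀ x ∈ K₂, c • x ∈ K₂)
    (hv : ‖v‖ = 1) (hν : ‖ν‖ = 1) (hνv : ⟪ν, v⟫ = 0) (hvK₁ : v ∈ K₁) (hvK₂ : v ∈ K₂)
    (hK₁ : ∀ p ∈ K₁, ⟪ν, p⟫ ≤ 0) (hd : dtH K₁ K₂ ≤ δ) (hδ : δ < 1) :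
    ∃ T, 0 ≤ T ∧ T ≤ δ * √(1 + T ^ 2) ∧ v + T • ν ∈ frontier K₂ := by
  have hbound : ∀ t, v + t • ν ∈ K₂ → t ≤ δ * √(1 + t ^ 2) := by
    intro t ht
    have hN : 0 < √(1 + t ^ 2) := by positivity
    have hu := inner_le_of_dtH_le hν.le hK₁ ⟨v, hvK₁, by simp [hv]⟩ hd
      (hcone _ (inv_nonneg.2 hN.le) _ ht) (by
        rw [norm_smul, norm_add_smul_of_orthonormal hv hν hνv, norm_inv,
          Real.norm_of_nonneg hN.le, inv_mul_cancel₀ hN.ne'])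
    rw [mul_comm δ]
    rwa [real_inner_smul_right, inner_add_right, hνv, real_inner_smul_right,
      real_inner_self_eq_norm_sq, hν, one_pow, mul_one, zero_add, inv_mul_le_iff₀ hN] at hu
  have hδ0 : 0 ≤ δ := hausdorffDist_nonneg.trans hd
  have hbdd : BddAbove {t : ℝ | 0 ≤ t ∧ v + t • ν ∈ K₂} := by
    refine ⟨δ / (1 - δ), fun t ⟨ht, htK⟩ => ?_⟩
    have hsqrt : √(1 + t ^ 2) ≤ 1 + t := Real.sqrt_le_iff.2 ⟨by linarith, by nlinarith⟩
    rw [le_div_iff₀ (by linarith)]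
    nlinarith [hbound t htK]
  obtain ⟨T, hT0, hT⟩ := exists_nonneg_mem_frontier_of_bddAbove (z := fun t => v + t • ν)
    (by fun_prop) hK₂ (by simpa using hvK₂) hbdd
  exact ⟨T, hT0, hbound T (hK₂.frontier_subset hT), hT⟩

end InnerProductSpace

lemma mul_lt_one_of_le_mul_sqrt {δ T η : ℝ} (hδ : 0 < δ) (hT0 : 0 ≤ T)
    (hT : T ≤ δ * √(1 + T ^ 2)) (hη0 : 0 ≤ η) (hη : η < √(1 / δ ^ 2 - 1)) : T * η < 1 := by
  have hT2 : T ^ 2 ≤ δ ^ 2 * (1 + T ^ 2) := by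
    calc T ^ 2 ≤ (δ * √(1 + T ^ 2)) ^ 2 := pow_le_pow_left₀ hT0 hT 2
      _ = δ ^ 2 * (1 + T ^ 2) := by rw [mul_pow, Real.sq_sqrt (by positivity)]
  have hη2 : δ ^ 2 * η ^ 2 < 1 - δ ^ 2 := by
    have h := mul_lt_mul_of_pos_left ((Real.lt_sqrt hη0).1 hη) (by positivity : 0 < δ ^ 2)
    rw [mul_sub, mul_one_div_cancel (by positivity)] at h
    linarith
  nlinarith [mul_nonneg hT0 hη0]

section Homogenization

variable {m : ℕ}

@[simp] lemma lift1_fst (y : Em m) : (lift1 y).fst = y := rfl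

@[simp] lemma lift1_snd (y : Em m) : (lift1 y).snd = 1 := rfl

lemma lift1_ne_zero (y : Em m) : lift1 y ≠ 0 :=
  fun h => one_ne_zero (congrArg WithLp.snd h)

lemma norm_lift1_sq (y : Em m) : ‖lift1 y‖ ^ 2 = ‖y‖ ^ 2 + 1 := by
  simp [WithLp.prod_norm_sq_eq_of_L2]

lemma inner_lift1 (q : Em1 m) (y : Em m) : ⟪q, lift1 y⟫ = ⟪q.fst, y⟫ + q.snd := by
  simp [WithLp.prod_inner_apply]

lemma smul_mem_homog {Z : Set (Em m)} {c : ℝ} (hc : 0 ≤ c) {q : Em1 m} (hq : q ∈ homog Z) :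
    c • q ∈ homog Z :=
  map_mem_closure (continuous_const_smul c) hq fun _ hp => smul_mem_coneHull hp hc

lemma homog_mono {Y Z : Set (Em m)} (h : Y ⊆ Z) : homog Y ⊆ homog Z :=
  closure_mono (coneHull_mono (image_mono h))

lemma isClosed_homog (Z : Set (Em m)) : IsClosed (homog Z) := isClosed_closure

lemma lift1_mem_homog {Z : Set (Em m)} {y : Em m} (hy : y ∈ Z) : lift1 y ∈ homog Z :=
  subset_closure (subset_coneHull (mem_image_of_mem lift1 hy))

lemma inner_nonpos_of_mem_homog {Z : Set (Em m)} {ν : Em1 m} (hZ : ∀ x ∈ Z, ⟪ν, lift1 x⟫ ≤ 0)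
    {q : Em1 m} (hq : q ∈ homog Z) : ⟪ν, q⟫ ≤ 0 := by
  refine closure_minimal ?_
    (isClosed_le (by fun_prop : Continuous fun p : Em1 m => ⟪ν, p⟫) continuous_const) hq
  rintro _ ⟨k, a, v, ha, hv, rfl⟩
  simp only [mem_ofPred_eq, inner_sum, real_inner_smul_right]
  refine Finset.sum_nonpos fun i _ => mul_nonpos_of_nonneg_of_nonpos (ha i) ?_
  obtain ⟨x, hx, hxv⟩ := hv i
  exact hxv ▸ hZ x hx

def dehom (q : Em1 m) : Em m := q.snd⁻¹ • q.fst

lemma snd_smul_lift1_dehom {q : Em1 m} (hq : q.snd ≠ 0) : q.snd • lift1 (dehom q) = q := by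
  apply WithLp.ofLp_injective
  ext
  · simp [dehom, smul_inv_smul₀ hq]
  · simp

lemma continuousAt_dehom {q : Em1 m} (hq : q.snd ≠ 0) : ContinuousAt dehom q :=
  ((WithLp.sndL 2 ℝ (Em m) ℝ).continuous.continuousAt.inv₀ hq).smul
    (WithLp.fstL 2 ℝ (Em m) ℝ).continuous.continuousAt

lemma dehom_mem_of_mem_coneHull {B : Set (Em m)} (hB : Convex ℝ B) {q : Em1 m}
    (hq : q ∈ coneHull (lift1 '' B)) (hpos : 0 < q.snd) : dehom q ∈ B := by
  obtain ⟨k, a, v, ha, hv, rfl⟩ := hq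
  choose b hb hbv using hv
  obtain rfl : v = fun i => lift1 (b i) := funext fun i => (hbv i).symm
  have hsnd : (∑ i, a i • lift1 (b i)).snd = ∑ i, a i := by
    rw [← WithLp.sndL_apply 2 ℝ, map_sum]; simp
  have hfst : (∑ i, a i • lift1 (b i)).fst = ∑ i, a i • b i := by
    rw [← WithLp.fstL_apply 2 ℝ, map_sum]; simp
  rw [hsnd] at hpos
  have := hB.centerMass_mem (t := Finset.univ) (fun i _ => ha i) hpos (fun i _ => hb i)
  rwa [Finset.centerMass, ← hsnd, ← hfst] at this

lemma dehom_mem_of_mem_homog {B : Set (Em m)} (hBc : IsClosed B) (hB : Convex ℝ B) {q : Em1 m}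
    (hq : q ∈ homog B) (hpos : 0 < q.snd) : dehom q ∈ B := by
  have hq' : q ∈ closure (coneHull (lift1 '' B) ∩ {p | 0 < p.snd}) := by
    rw [inter_comm]
    exact (isOpen_lt continuous_const (WithLp.sndL 2 ℝ (Em m) ℝ).continuous).inter_closure
      ⟨hpos, hq⟩
  refine hBc.closure_subset_iff.2 ?_
    ((continuousAt_dehom hpos.ne').continuousWithinAt.mem_closure_image hq')
  rintro _ ⟨p, ⟨hp, hp0⟩, rfl⟩
  exact dehom_mem_of_mem_coneHull hB hp hp0

lemma mem_interior_homog_of_dehom_mem_interior {B : Set (Em m)} {q : Em1 m} (hpos : 0 < q.snd)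
    (hq : dehom q ∈ interior B) : q ∈ interior (homog B) := by
  rw [mem_interior_iff_mem_nhds]
  have hsnd : ∀ᶠ p in 𝓝 q, 0 < p.snd :=
    (WithLp.sndL 2 ℝ (Em m) ℝ).continuous.continuousAt.eventually (lt_mem_nhds hpos)
  filter_upwards [hsnd, (continuousAt_dehom hpos.ne').eventually (isOpen_interior.mem_nhds hq)]
    with p hp hpB
  rw [← snd_smul_lift1_dehom hp.ne']
  exact subset_closure (smul_mem_coneHull
    (subset_coneHull (mem_image_of_mem lift1 (interior_subset hpB))) hp.le)

lemma dehom_mem_frontier {B : Set (Em m)} (hBc : IsClosed B) (hB : Convex ℝ B) {q : Em1 m}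
    (hq : q ∈ frontier (homog B)) (hpos : 0 < q.snd) : dehom q ∈ frontier B := by
  rw [hBc.frontier_eq]
  exact ⟨dehom_mem_of_mem_homog hBc hB ((isClosed_homog B).frontier_subset hq) hpos,
    fun h => hq.2 (mem_interior_homog_of_dehom_mem_interior hpos h)⟩

lemma normalize_lift1_dehom {q : Em1 m} (hpos : 0 < q.snd) :
    ‖lift1 (dehom q)‖⁻¹ • lift1 (dehom q) = ‖q‖⁻¹ • q := by
  conv_rhs => rw [← snd_smul_lift1_dehom hpos.ne']
  rw [norm_smul, Real.norm_of_nonneg hpos.le, smul_smul]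
  congr 1
  field_simp

lemma exists_normal_homog {A : Set (Em m)} (hA : Convex ℝ A) {y : Em m} (hyA : y ∈ A)
    (hy : y ∉ interior A) :
    ∃ ν : Em1 m, ‖ν‖ = 1 ∧ ⟪ν, lift1 y⟫ = 0 ∧ ∀ q ∈ homog A, ⟪ν, q⟫ ≤ 0 := by
  obtain ⟨s, hs0, hs⟩ := exists_ne_zero_inner_le_of_notMem_interior hA hyA hy
  set ν₀ : Em1 m := WithLp.toLp 2 (s, -⟪s, y⟫)
  have hν₀ : ∀ x, ⟪ν₀, lift1 x⟫ = ⟪s, x⟫ - ⟪s, y⟫ := fun x => by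
    rw [inner_lift1, sub_eq_add_neg]; rfl
  have hν₀0 : ν₀ ≠ 0 := fun h => hs0 (congrArg WithLp.fst h)
  refine ⟨‖ν₀‖⁻¹ • ν₀, norm_smul_inv_norm hν₀0, ?_, fun q hq => ?_⟩
  · rw [real_inner_smul_left, hν₀, sub_self, mul_zero]
  · rw [real_inner_smul_left]
    refine mul_nonpos_of_nonneg_of_nonpos (by positivity) (inner_nonpos_of_mem_homog ?_ hq)
    exact fun x hx => (hν₀ x).trans_le (sub_nonpos.2 (hs x hx))

lemma abs_snd_mul_norm_lift1_le {ν : Em1 m} {y : Em m} (hν : ‖ν‖ = 1)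
    (hνy : ⟪ν, lift1 y⟫ = 0) : |ν.snd| * ‖lift1 y‖ ≤ ‖y‖ := by
  have hsnd : |ν.snd| ≤ ‖ν.fst‖ * ‖y‖ := by
    rw [inner_lift1, add_eq_zero_iff_neg_eq] at hνy
    rw [← hνy, abs_neg]
    exact abs_real_inner_le_norm _ _
  have hnorm : ‖ν.fst‖ ^ 2 + ν.snd ^ 2 = 1 := by
    simpa [hν] using (WithLp.prod_norm_sq_eq_of_L2 ν).symm
  refine (pow_le_pow_iff_left₀ (by positivity) (norm_nonneg y) two_ne_zero).1 ?_
  rw [mul_pow, norm_lift1_sq, sq_abs]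
  nlinarith [pow_le_pow_left₀ (abs_nonneg _) hsnd 2, sq_abs ν.snd]

lemma snd_add_smul_pos {ν : Em1 m} {y : Em m} {T : ℝ} (hν : ‖ν‖ = 1) (hνy : ⟪ν, lift1 y⟫ = 0)
    (hT0 : 0 ≤ T) (hTy : T * ‖y‖ < 1) : 0 < (‖lift1 y‖⁻¹ • lift1 y + T • ν).snd := by
  have hV : 0 < ‖lift1 y‖ := norm_pos_iff.2 (lift1_ne_zero y)
  have h : -1 < T * ν.snd * ‖lift1 y‖ := by
    have := mul_le_mul_of_nonneg_left (abs_snd_mul_norm_lift1_le hν hνy) hT0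
    nlinarith [neg_abs_le ν.snd, mul_nonneg hT0 hV.le]
  rw [WithLp.add_snd, WithLp.smul_snd, WithLp.smul_snd, lift1_snd, smul_eq_mul, smul_eq_mul,
    mul_one, ← mul_pos_iff_of_pos_right hV, add_mul, inv_mul_cancel₀ hV.ne']
  linarith

end Homogenization

theorem exists_boundary_point_close_to_ray_general
    {m : ℕ} (A B : Set (Em m))
    (hAcl : IsClosed A) (hBcl : IsClosed B)
    (hAconv : Convex ℝ A) (hBconv : Convex ℝ B) (hAB : A ⊆ B)
    (δ : ℝ) (hδ : δ ∈ Set.Ioo (0:ℝ) 1) (hd : dtH (homog A) (homog B) ≤ δ)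
    (y : Em m) (hy : y ∈ frontier A) (hynorm : ‖y‖ < Real.sqrt (1 / δ ^ 2 - 1)) :
    ∃ nn ∈ frontier B, infDist (‖lift1 nn‖⁻¹ • lift1 nn) (ray (lift1 y)) ≤ δ := by
  have hyA : y ∈ A := hAcl.frontier_subset hy
  obtain ⟨ν, hν, hνy, hνA⟩ := exists_normal_homog hAconv hyA hy.2
  set v := ‖lift1 y‖⁻¹ • lift1 y
  have hv : ‖v‖ = 1 := norm_smul_inv_norm (lift1_ne_zero y)
  have hνv : ⟪ν, v⟫ = 0 := by rw [real_inner_smul_right, hνy, mul_zero]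
  have hvA : v ∈ homog A := smul_mem_homog (by positivity) (lift1_mem_homog hyA)
  obtain ⟨T, hT0, hTδ, hfr⟩ := exists_frontier_along_orthogonal_ray (isClosed_homog B)
    (fun _ hc _ => smul_mem_homog hc) hv hν hνv hvA (homog_mono hAB hvA) hνA hd hδ.2
  have hpos := snd_add_smul_pos hν hνy hT0
    (mul_lt_one_of_le_mul_sqrt hδ.1 hT0 hTδ (norm_nonneg y) hynorm)
  refine ⟨dehom (v + T • ν), dehom_mem_frontier hBcl hBconv hfr hpos, ?_⟩
  have hN : 0 < √(1 + T ^ 2) := by positivity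
  rw [normalize_lift1_dehom hpos, norm_add_smul_of_orthonormal hv hν hνv]
  calc _ ≤ (√(1 + T ^ 2))⁻¹ * ‖v + T • ν - ‖lift1 y‖⁻¹ • lift1 y‖ :=
        infDist_smul_ray_le _ _ (by positivity) (inv_nonneg.2 hN.le)
    _ = T / √(1 + T ^ 2) := by
        rw [add_sub_cancel_left, norm_smul, hν, Real.norm_of_nonneg hT0, mul_one, inv_mul_eq_div]
    _ ≤ δ := (div_le_iff₀ hN).2 (by linarith)

/-- If `A ⊆ B` are nonempty closed convex sets with `d_tH(hom A, hom B) ≤ δ` for some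
`δ ∈ (0,1)`, and `y ∈ bd A` with `‖y‖ < √(1/δ² − 1)`, then there exists `n ∈ bd B` with
`d((n,1)/‖(n,1)‖, cone{(y,1)}) ≤ δ`. -/
theorem exists_boundary_point_close_to_ray
    {m : ℕ} (A B : Set (Em m)) (hAne : A.Nonempty) (hBne : B.Nonempty)
    (hAcl : IsClosed A) (hBcl : IsClosed B)
    (hAconv : Convex ℝ A) (hBconv : Convex ℝ B) (hAB : A ⊆ B)
    (δ : ℝ) (hδ : δ ∈ Set.Ioo (0:ℝ) 1) (hd : dtH (homog A) (homog B) ≤ δ)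
    (y : Em m) (hy : y ∈ frontier A) (hynorm : ‖y‖ < Real.sqrt (1 / δ ^ 2 - 1)) :
    ∃ nn ∈ frontier B, infDist (‖lift1 nn‖⁻¹ • lift1 nn) (ray (lift1 y)) ≤ δ :=
  exists_boundary_point_close_to_ray_general A B hAcl hBcl hAconv hBconv hAB δ hδ hd y hy hynorm

end
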